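/- For every natural number n, the diagonal integral satisfies I_{n,n} = ∫_0^∞ (f_n(x))^2 dx = (2n)! · π / 2^{2n+2}. -/

import Mathlib

/-!
Since `1 / (1 + x²) = Re (i / (x + i))`, differentiating under `Re` gives
`f_n(x) = Re (i (-1)ⁿ n! (x + i)^-(n+1))`. The identity `(Re w)² = (|w|² + Re (w²)) / 2` splits
`f_n²` into `(n!)² / 2 · (1 + x²)^-(n+1)`, whose integral over `(0, ∞)` is a Wallis integral,
and `-(n!)² / 2 · Re (x + i)^-(2n+2)`, whose integral vanishes: a primitive is a multiple of
`(x + i)^-(2n+1)`, which tends to `0` at infinity and equals `±i / (2n + 1)` at `0`.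
-/

open Complex MeasureTheory Set Filter Real Topology

lemma Complex.re_sq_eq_norm_sq_add_re_sq_div_two (w : ℂ) :
    w.re ^ 2 = (‖w‖ ^ 2 + (w ^ 2).re) / 2 := by
  rw [Complex.sq_norm, normSq_apply, sq w, mul_re]
  ring

lemma Complex.ofReal_add_I_ne_zero (x : ℝ) : (x : ℂ) + I ≠ 0 := by
  intro h
  simpa using congrArg im h

lemma Complex.norm_ofReal_add_I_sq (x : ℝ) : ‖(x : ℂ) + I‖ ^ 2 = 1 + x ^ 2 := by
  rw [Complex.sq_norm, normSq_apply]
  simp only [add_re, ofReal_re, I_re, add_zero, add_im, ofReal_im, I_im, zero_add, mul_one]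
  ring

lemma iteratedDeriv_re_comp_ofReal {g : ℕ → ℂ → ℂ}
    (hg : ∀ n (x : ℝ), HasDerivAt (g n) (g (n + 1) x) x) (n : ℕ) :
    iteratedDeriv n (fun x : ℝ => (g 0 x).re) = fun x : ℝ => (g n x).re := by
  induction n with
  | zero => exact iteratedDeriv_zero
  | succ n ih =>
    rw [iteratedDeriv_succ, ih]
    exact funext fun x => (hg n x).real_of_complex.deriv

lemma hasDerivAt_inv_add_pow {c z : ℂ} (hz : z + c ≠ 0) (k : ℕ) :
    HasDerivAt (fun w => ((w + c) ^ (k + 1))⁻¹) (-(k + 1) * ((z + c) ^ (k + 2))⁻¹) z := by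
  have hpow : HasDerivAt (fun w => (w + c) ^ (k + 1)) ((k + 1) * (z + c) ^ k) z := by
    simpa using ((hasDerivAt_id z).add_const c).fun_pow (k + 1)
  refine (hpow.inv (pow_ne_zero _ hz)).congr_deriv ?_
  field_simp
  ring

lemma iteratedDeriv_one_div_one_add_sq (n : ℕ) (x : ℝ) :
    iteratedDeriv n (fun x : ℝ => 1 / (1 + x ^ 2)) x
      = (I * (-1) ^ n * n.factorial * (((x : ℂ) + I) ^ (n + 1))⁻¹).re := by
  set g : ℕ → ℂ → ℂ := fun n z => I * (-1) ^ n * n.factorial * ((z + I) ^ (n + 1))⁻¹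
  have hg : ∀ n (x : ℝ), HasDerivAt (g n) (g (n + 1) x) x := fun n x => by
    refine ((hasDerivAt_inv_add_pow (ofReal_add_I_ne_zero x) n).const_mul
      (I * (-1) ^ n * n.factorial)).congr_deriv ?_
    simp only [g, Nat.factorial_succ]
    push_cast
    ring
  have hf : (fun x : ℝ => 1 / (1 + x ^ 2)) = fun x : ℝ => (g 0 x).re := by
    ext x
    simp only [one_div, pow_zero, mul_one, Nat.factorial_zero, Nat.cast_one, zero_add, pow_one,
      mul_re, I_re, inv_re, add_re, ofReal_re, add_zero, normSq_apply, add_im, ofReal_im, I_im,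
      zero_mul, inv_im, one_mul, zero_sub, g]
    ring
  rw [hf, iteratedDeriv_re_comp_ofReal hg]

lemma sq_iteratedDeriv_one_div_one_add_sq (n : ℕ) (x : ℝ) :
    iteratedDeriv n (fun x : ℝ => 1 / (1 + x ^ 2)) x ^ 2
      = (n.factorial : ℝ) ^ 2 / 2 * ((1 + x ^ 2) ^ (n + 1))⁻¹
        - (n.factorial : ℝ) ^ 2 / 2 * ((((x : ℂ) + I) ^ (2 * n + 2))⁻¹).re := by
  rw [iteratedDeriv_one_div_one_add_sq, re_sq_eq_norm_sq_add_re_sq_div_two]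
  have hnorm : ‖I * (-1) ^ n * n.factorial * (((x : ℂ) + I) ^ (n + 1))⁻¹‖ ^ 2
      = (n.factorial : ℝ) ^ 2 * ((1 + x ^ 2) ^ (n + 1))⁻¹ := by
    simp only [norm_mul, norm_I, norm_pow, norm_neg, norm_one, Complex.norm_natCast, norm_inv,
      one_pow, one_mul, mul_pow, inv_pow, ← pow_mul, ← norm_ofReal_add_I_sq]
    ring
  have hsq : (I * (-1) ^ n * n.factorial * (((x : ℂ) + I) ^ (n + 1))⁻¹) ^ 2
      = ((-(n.factorial : ℝ) ^ 2 : ℝ) : ℂ) * (((x : ℂ) + I) ^ (2 * n + 2))⁻¹ := by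
    have hpow : (((x : ℂ) + I) ^ (n + 1))⁻¹ ^ 2 = (((x : ℂ) + I) ^ (2 * n + 2))⁻¹ := by
      rw [inv_pow, ← pow_mul, show (n + 1) * 2 = 2 * n + 2 by ring]
    have hsign : ((-1 : ℂ) ^ n) ^ 2 = 1 := by
      rw [← pow_mul, pow_mul', neg_one_sq, one_pow]
    calc _ = I ^ 2 * ((-1 : ℂ) ^ n) ^ 2 * (n.factorial : ℂ) ^ 2
          * (((x : ℂ) + I) ^ (n + 1))⁻¹ ^ 2 := by ring
      _ = _ := by rw [I_sq, hsign, hpow]; push_cast; ring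
  rw [hnorm, hsq, re_ofReal_mul]
  ring

lemma integrable_inv_one_add_sq_pow (k : ℕ) :
    Integrable fun x : ℝ => ((1 + x ^ 2) ^ (k + 1))⁻¹ := by
  refine integrable_inv_one_add_sq.mono' (by fun_prop) (.of_forall fun x => ?_)
  rw [norm_inv, norm_pow, Real.norm_of_nonneg (by positivity)]
  exact inv_anti₀ (by positivity)
    (le_self_pow₀ (le_add_of_nonneg_right (sq_nonneg x)) (by omega))

lemma integrable_inv_ofReal_add_I_pow (k : ℕ) :
    Integrable fun x : ℝ => (((x : ℂ) + I) ^ (k + 2))⁻¹ := by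
  refine integrable_inv_one_add_sq.mono'
    (Continuous.inv₀ (by fun_prop) fun x =>
      pow_ne_zero _ (ofReal_add_I_ne_zero x)).aestronglyMeasurable
    (.of_forall fun x => ?_)
  have hone : 1 ≤ ‖(x : ℂ) + I‖ := (one_le_sq_iff₀ (norm_nonneg _)).mp <| by
    rw [norm_ofReal_add_I_sq]
    exact le_add_of_nonneg_right (sq_nonneg x)
  rw [norm_inv, norm_pow, ← norm_ofReal_add_I_sq]
  exact inv_anti₀ (by positivity) (pow_le_pow_right₀ hone (by omega))

lemma hasDerivAt_mul_inv_one_add_sq_pow (k : ℕ) (x : ℝ) :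
    HasDerivAt (fun x : ℝ => x * ((1 + x ^ 2) ^ (k + 1))⁻¹)
      ((2 * k + 2 : ℝ) * ((1 + x ^ 2) ^ (k + 2))⁻¹
        - (2 * k + 1 : ℝ) * ((1 + x ^ 2) ^ (k + 1))⁻¹) x := by
  have hpow : HasDerivAt (fun x : ℝ => (1 + x ^ 2) ^ (k + 1))
      ((k + 1) * (1 + x ^ 2) ^ k * (2 * x)) x := by
    simpa using ((hasDerivAt_pow 2 x).const_add 1).fun_pow (k + 1)
  refine ((hasDerivAt_id x).mul (hpow.inv (by positivity))).congr_deriv ?_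
  simp only [Pi.inv_apply, id_eq]
  field_simp
  ring

lemma tendsto_mul_inv_one_add_sq_pow_atTop (k : ℕ) :
    Tendsto (fun x : ℝ => x * ((1 + x ^ 2) ^ (k + 1))⁻¹) atTop (𝓝 0) := by
  refine squeeze_zero' ?_ ?_ tendsto_inv_atTop_zero
  · filter_upwards [eventually_ge_atTop 0] with x hx
    positivity
  · filter_upwards [eventually_gt_atTop 0] with x hx
    have hsq : x ^ 2 ≤ (1 + x ^ 2) ^ (k + 1) := (le_add_of_nonneg_left zero_le_one).trans
      (le_self_pow₀ (le_add_of_nonneg_right (sq_nonneg x)) (by omega))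
    calc x * ((1 + x ^ 2) ^ (k + 1))⁻¹ ≤ x * (x ^ 2)⁻¹ := by gcongr
      _ = x⁻¹ := by field_simp

lemma integral_Ioi_inv_one_add_sq_pow_succ (k : ℕ) :
    (2 * k + 2 : ℝ) * ∫ x in Ioi (0 : ℝ), ((1 + x ^ 2) ^ (k + 2))⁻¹
      = (2 * k + 1 : ℝ) * ∫ x in Ioi (0 : ℝ), ((1 + x ^ 2) ^ (k + 1))⁻¹ := by
  have h₁ := (integrable_inv_one_add_sq_pow k).integrableOn (s := Ioi 0)
  have h₂ := (integrable_inv_one_add_sq_pow (k + 1)).integrableOn (s := Ioi 0)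
  have := integral_Ioi_of_hasDerivAt_of_tendsto'
    (fun x _ => hasDerivAt_mul_inv_one_add_sq_pow k x)
    ((h₂.const_mul _).sub (h₁.const_mul _)) (tendsto_mul_inv_one_add_sq_pow_atTop k)
  rw [integral_sub (h₂.const_mul _) (h₁.const_mul _), integral_const_mul,
    integral_const_mul] at this
  simp only [ne_eq, OfNat.ofNat_ne_zero, not_false_eq_true, zero_pow, add_zero, one_pow,
    inv_one, mul_one, sub_self] at this
  linarith

lemma integral_Ioi_inv_one_add_sq_pow (n : ℕ) :
    ∫ x in Ioi (0 : ℝ), ((1 + x ^ 2) ^ (n + 1))⁻¹ = n.centralBinom * π / 2 ^ (2 * n + 1) := by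
  induction n with
  | zero => simp [integral_Ioi_inv_one_add_sq]
  | succ k ih =>
    have hrec := integral_Ioi_inv_one_add_sq_pow_succ k
    have hbinom : ((k + 1 : ℕ) : ℝ) * (k + 1).centralBinom
        = 2 * (2 * k + 1) * k.centralBinom := mod_cast Nat.succ_mul_centralBinom_succ k
    rw [ih] at hrec
    push_cast at hbinom
    refine mul_left_cancel₀ (by positivity : (2 * k + 2 : ℝ) ≠ 0) (hrec.trans ?_)
    rw [show 2 * (k + 1) + 1 = 2 * k + 1 + 2 by ring, pow_add]
    field_simp
    linear_combination (-(2 ^ 2 * 2 ^ (2 * k)) : ℝ) * hbinom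

lemma tendsto_inv_ofReal_add_I_pow_atTop (k : ℕ) :
    Tendsto (fun x : ℝ => (((x : ℂ) + I) ^ (k + 1))⁻¹) atTop (𝓝 0) := by
  have h : Tendsto (fun x : ℝ => (x : ℂ) + I) atTop (Bornology.cobounded ℂ) :=
    (tendsto_add_const_cobounded I).comp (RCLike.tendsto_ofReal_atTop_cobounded ℂ)
  simpa [inv_pow] using (tendsto_inv₀_cobounded.comp h).pow (k + 1)

lemma integral_Ioi_inv_ofReal_add_I_pow (k : ℕ) :
    ∫ x in Ioi (0 : ℝ), (((x : ℂ) + I) ^ (k + 2))⁻¹ = ((k + 1) * I ^ (k + 1))⁻¹ := by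
  have hderiv (x : ℝ) : HasDerivAt (fun x : ℝ => -(k + 1 : ℂ)⁻¹ * (((x : ℂ) + I) ^ (k + 1))⁻¹)
      (((x : ℂ) + I) ^ (k + 2))⁻¹ x := by
    refine (((hasDerivAt_inv_add_pow (ofReal_add_I_ne_zero x) k).comp_ofReal).const_mul
      _).congr_deriv ?_
    field_simp
  have hlim : Tendsto (fun x : ℝ => -(k + 1 : ℂ)⁻¹ * (((x : ℂ) + I) ^ (k + 1))⁻¹)
      atTop (𝓝 0) := by
    simpa using (tendsto_inv_ofReal_add_I_pow_atTop k).const_mul (-(k + 1 : ℂ)⁻¹)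
  rw [integral_Ioi_of_hasDerivAt_of_tendsto' (fun x _ => hderiv x)
    (integrable_inv_ofReal_add_I_pow k).integrableOn hlim]
  simp [mul_comm]

lemma re_integral_Ioi_inv_ofReal_add_I_pow_even (n : ℕ) :
    (∫ x in Ioi (0 : ℝ), (((x : ℂ) + I) ^ (2 * n + 2))⁻¹).re = 0 := by
  rw [integral_Ioi_inv_ofReal_add_I_pow, pow_succ, pow_mul, I_sq]
  rcases neg_one_pow_eq_or ℂ n with h | h <;> simp [h]

theorem stmt_13 (f : ℝ → ℝ) (hf : ∀ x : ℝ, f x = 1 / (1 + x ^ 2)) (n : ℕ) :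
    ∫ x in Set.Ioi (0 : ℝ), (iteratedDeriv n f x) ^ 2
      = ((2 * n).factorial : ℝ) * Real.pi / 2 ^ (2 * n + 2) := by
  obtain rfl : f = fun x => 1 / (1 + x ^ 2) := funext hf
  have hc := (integrable_inv_ofReal_add_I_pow (2 * n)).integrableOn (s := Ioi 0)
  have hc_re : IntegrableOn (fun x : ℝ => ((((x : ℂ) + I) ^ (2 * n + 2))⁻¹).re) (Ioi 0) :=
    hc.re
  have hvanish : ∫ x in Ioi (0 : ℝ), ((((x : ℂ) + I) ^ (2 * n + 2))⁻¹).re = 0 :=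
    (integral_re hc).trans (re_integral_Ioi_inv_ofReal_add_I_pow_even n)
  simp_rw [sq_iteratedDeriv_one_div_one_add_sq]
  rw [integral_sub ((integrable_inv_one_add_sq_pow n).integrableOn.const_mul _)
      (hc_re.const_mul _), integral_const_mul, integral_const_mul, hvanish,
    integral_Ioi_inv_one_add_sq_pow,
    ← Nat.choose_mul_factorial_mul_factorial (by omega : n ≤ 2 * n), two_mul n,
    Nat.add_sub_cancel]
  push_cast [Nat.centralBinom_eq_two_mul_choose, two_mul]
  ring
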